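/- Let P and S be disjoint finite sets of points in the Euclidean plane, let k be a natural number, and let r > 0. Suppose there exists a tree T' with vertex set P such that every edge {p,q} of T' satisfies w_r(p,q) < ∞ and the sum over the edges {p,q} of T' of ⌊w_r(p,q)/2⌋ is at most k. Then there exist a subset S' ⊆ S with |S'| ≤ k and a tree whose vertex set is P ∪ S' all of whose edges (straight segments between its vertices) have Euclidean length at most 2r. -/

import Mathlib

open scoped ENNReal

noncomputable section

/-- Points of the Euclidean plane. -/
abbrev Pt : Type := EuclideanSpace ℝ (Fin 2)

noncomputable instance : DecidableEq Pt := Classical.decEq _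

/-- The graph `G_r` on vertex set `P ∪ S`: two distinct points of `P ∪ S` are adjacent
iff their Euclidean distance is at most `r`.  (Points outside `P ∪ S` are isolated.) -/
def stGraph (P S : Finset Pt) (r : ℝ) : SimpleGraph Pt where
  Adj x y := x ≠ y ∧ x ∈ P ∪ S ∧ y ∈ P ∪ S ∧ dist x y ≤ r
  symm := by
    constructor
    rintro x y ⟨h1, h2, h3, h4⟩
    exact ⟨h1.symm, h3, h2, by rwa [dist_comm]⟩
  loopless := by constructor; rintro x ⟨h, -⟩; exact h rfl

/-- `wgt P S r p q` : the minimum, over all paths from `p` to `q` in `G_r`, of the number of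
vertices from `S` appearing on the path; `⊤` if there is no such path. -/
def wgt (P S : Finset Pt) (r : ℝ) (p q : Pt) : ℕ∞ :=
  sInf {n : ℕ∞ | ∃ wk : (stGraph P S r).Walk p q, wk.IsPath ∧
    n = ((wk.support.filter (fun x => decide (x ∈ S))).length : ℕ∞)}

/-- The weight as a function on unordered pairs (it is symmetric, so the symmetrization
`min (wgt p q) (wgt q p)` coincides with `wgt p q`). -/
def ewgt (P S : Finset Pt) (r : ℝ) : Sym2 Pt → ℕ∞ :=
  Sym2.lift ⟨fun p q => min (wgt P S r p q) (wgt P S r q p), fun _ _ => min_comm _ _⟩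

/-!
Along a path of `G_r` between two terminals, keep every terminal and, in each run of
consecutive Steiner points, every second one. Consecutive kept points are then at most two
steps of the path apart, hence at distance at most `2r`, and a path with `w` Steiner points
keeps at most `⌊w/2⌋` of them. Doing this for every edge of `T'` gives at most `k` Steiner
points, and the kept points of all edges, glued along the connected tree `T'`, span a connected
`2r`-distance graph on `P ∪ S'`; any spanning tree of it will do.
-/

def distGraph (α : Type*) [PseudoMetricSpace α] (ρ : ℝ) : SimpleGraph α where
  Adj x y := x ≠ y ∧ dist x y ≤ ρ
  symm := ⟨fun x y h => ⟨h.1.symm, by rw [dist_comm]; exact h.2⟩⟩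
  loopless := ⟨fun _ h => h.1 rfl⟩

namespace SimpleGraph

variable {V ι : Type*} {G : SimpleGraph V}

lemma reachable_induce_of_subset {s t : Set V} (ht : (G.induce t).Preconnected) (hts : t ⊆ s)
    {x y : V} (hx : x ∈ t) (hy : y ∈ t) : (G.induce s).Reachable ⟨x, hts hx⟩ ⟨y, hts hy⟩ :=
  (ht ⟨x, hx⟩ ⟨y, hy⟩).map (induceHomOfLE G hts).toHom

lemma Connected.induce_connected_of_edge_patches {H : SimpleGraph ι} (hH : H.Connected)
    (f : ι → V) (K : Sym2 ι → Set V) {s : Set V} (hfs : ∀ i, f i ∈ s)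
    (hKs : ∀ e ∈ H.edgeSet, K e ⊆ s) (hfK : ∀ e ∈ H.edgeSet, ∀ i ∈ e, f i ∈ K e)
    (hK : ∀ e ∈ H.edgeSet, (G.induce (K e)).Preconnected)
    (hcover : ∀ v ∈ s, (∃ i, f i = v) ∨ ∃ e ∈ H.edgeSet, v ∈ K e) :
    (G.induce s).Connected := by
  have hedge : ∀ e (he : e ∈ H.edgeSet), ∀ i ∈ e, ∀ v (hv : v ∈ K e),
      (G.induce s).Reachable ⟨f i, hfs i⟩ ⟨v, hKs e he hv⟩ := fun e he i hi v hv =>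
    reachable_induce_of_subset (hK e he) (hKs e he) (hfK e he i hi) hv
  have hpre : ∀ i j, (G.induce s).Reachable ⟨f i, hfs i⟩ ⟨f j, hfs j⟩ := by
    intro i j
    obtain ⟨w⟩ := hH.preconnected i j
    induction w with
    | nil => rfl
    | @cons i j _ hij _ ih =>
      exact (hedge _ hij i (Sym2.mem_mk_left i j) _
        (hfK _ hij j (Sym2.mem_mk_right i j))).trans ih
  obtain ⟨i₀⟩ := hH.nonempty
  rw [connected_iff_exists_forall_reachable]
  refine ⟨⟨f i₀, hfs i₀⟩, fun ⟨v, hv⟩ => ?_⟩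
  obtain ⟨i, rfl⟩ | ⟨e, he, hve⟩ := hcover v hv
  · exact hpre i₀ i
  · induction e using Sym2.ind with
    | _ i j => exact (hpre i₀ i).trans (hedge _ he i (Sym2.mem_mk_left i j) v hve)

end SimpleGraph

lemma distGraph.induce_insert_connected {α : Type*} [PseudoMetricSpace α] {ρ : ℝ}
    {s : Set α} {a x : α} (hs : ((distGraph α ρ).induce s).Connected) (hx : x ∈ s)
    (hax : dist a x ≤ ρ) :
    ((distGraph α ρ).induce (insert a s)).Connected := by
  obtain rfl | hne := eq_or_ne a x
  · rwa [Set.insert_eq_of_mem hx]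
  · have hpair : {a, x} ∪ s = insert a s := by
      rw [Set.insert_union, Set.singleton_union, Set.insert_eq_of_mem hx]
    rw [← hpair]
    have hpair_conn := SimpleGraph.induce_pair_connected_of_adj (G := distGraph α ρ) ⟨hne, hax⟩
    exact SimpleGraph.induce_union_connected hpair_conn.preconnected hs.preconnected
      ⟨x, by simp, by simpa using hx⟩

lemma Finset.card_filter_insert_le {α : Type*} [DecidableEq α] (p : α → Prop)
    [DecidablePred p] (a : α) (s : Finset α) :
    ((insert a s).filter p).card ≤ (if p a then 1 else 0) + (s.filter p).card := by
  rw [Finset.filter_insert]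
  split_ifs
  · exact (Finset.card_insert_le _ _).trans_eq (add_comm _ _)
  · simp

section SteinerPaths

variable {P S : Finset Pt} {r : ℝ}

lemma wgt_comm (p q : Pt) : wgt P S r p q = wgt P S r q p := by
  unfold wgt
  congr 1
  ext n
  constructor <;>
  · rintro ⟨w, hw, rfl⟩
    exact ⟨w.reverse, hw.reverse, by
      rw [SimpleGraph.Walk.support_reverse, List.filter_reverse, List.length_reverse]⟩

lemma ewgt_mk (p q : Pt) : ewgt P S r s(p, q) = wgt P S r p q := by
  simp [ewgt, wgt_comm q p]

lemma exists_walk_of_wgt_ne_top {p q : Pt} (h : wgt P S r p q ≠ ⊤) :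
    ∃ w : (stGraph P S r).Walk p q,
      ((w.support.filter (· ∈ S)).length : ℕ∞) = wgt P S r p q := by
  have hne : {n : ℕ∞ | ∃ w : (stGraph P S r).Walk p q, w.IsPath ∧
      n = ((w.support.filter (· ∈ S)).length : ℕ∞)}.Nonempty := by
    contrapose! h
    rw [wgt, h, sInf_empty]
  obtain ⟨w, -, hw⟩ := csInf_mem hne
  exact ⟨w, hw.symm⟩

/-- The start of the walk is always kept, which is why it is counted twice in the bound. -/
lemma exists_connected_finset_of_walk :
    ∀ {a b : Pt} (w : (stGraph P S r).Walk a b), a ∈ P ∪ S → b ∉ S →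
      ∃ K : Finset Pt, K ⊆ P ∪ S ∧ a ∈ K ∧ b ∈ K ∧
        (K.filter (· ∈ S)).card ≤ ((a :: w.support).filter (· ∈ S)).length / 2 ∧
        ((distGraph Pt (2 * r)).induce K).Connected
  | a, _, .nil, ha, _ => ⟨{a}, by simpa using ha, by simp, by simp, by
      by_cases haS : a ∈ S <;> simp [Finset.filter_singleton, haS], by
      rw [Finset.coe_singleton]; exact ⟨.of_subsingleton⟩⟩
  | a, b, .cons (v := x) hax w, ha, hb => by
    have hax' : dist a x ≤ 2 * r := by linarith [dist_nonneg (x := a) (y := x), hax.2.2.2]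
    by_cases hxS : x ∈ S
    · cases w with
      | nil => exact absurd hxS hb
      | @cons _ y _ hxy w =>
        obtain ⟨K, hKPS, hyK, hbK, hcard, hK⟩ := exists_connected_finset_of_walk w hxy.2.2.1 hb
        have hay : dist a y ≤ 2 * r :=
          (dist_triangle a x y).trans (by linarith [hax.2.2.2, hxy.2.2.2])
        refine ⟨insert a K, Finset.insert_subset ha hKPS, Finset.mem_insert_self _ _,
          Finset.mem_insert_of_mem hbK, ?_, ?_⟩
        · have hKa := Finset.card_filter_insert_le (· ∈ S) a K
          by_cases haS : a ∈ S <;> by_cases hyS : y ∈ S <;>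
            simp [haS, hxS, hyS] at hKa hcard ⊢ <;> omega
        · rw [Finset.coe_insert]
          exact distGraph.induce_insert_connected hK hyK hay
    · obtain ⟨K, hKPS, hxK, hbK, hcard, hK⟩ := exists_connected_finset_of_walk w hax.2.2.1 hb
      refine ⟨insert a K, Finset.insert_subset ha hKPS, Finset.mem_insert_self _ _,
        Finset.mem_insert_of_mem hbK, ?_, ?_⟩
      · have hKa := Finset.card_filter_insert_le (· ∈ S) a K
        rw [List.filter_cons_of_neg (by simpa using hxS)] at hcard
        by_cases haS : a ∈ S <;> simp [haS] at hKa ⊢ <;> omega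
      · rw [Finset.coe_insert]
        exact distGraph.induce_insert_connected hK hxK hax'

lemma exists_connected_finset_of_ewgt_ne_top (hPS : Disjoint P S) {e : Sym2 ↥P}
    (he : ewgt P S r (e.map Subtype.val) ≠ ⊤) :
    ∃ K : Finset Pt, K ⊆ P ∪ S ∧ (∀ p ∈ e, ↑p ∈ K) ∧
      (K.filter (· ∈ S)).card ≤ (ewgt P S r (e.map Subtype.val)).toNat / 2 ∧
      ((distGraph Pt (2 * r)).induce K).Connected := by
  induction e using Sym2.ind with
  | _ p q =>
    simp only [Sym2.map_mk, ewgt_mk] at he ⊢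
    obtain ⟨w, hw⟩ := exists_walk_of_wgt_ne_top he
    have hpS : ↑p ∉ S := Finset.disjoint_left.mp hPS p.2
    obtain ⟨K, hKPS, hpK, hqK, hcard, hK⟩ := exists_connected_finset_of_walk w
      (Finset.mem_union_left S p.2) (Finset.disjoint_left.mp hPS q.2)
    refine ⟨K, hKPS, by simp [hpK, hqK], ?_, hK⟩
    rwa [← hw, ENat.toNat_natCast, ← List.filter_cons_of_neg (by simpa using hpS)]

end SteinerPaths

theorem stmt4_general (P S : Finset Pt) (hPS : Disjoint P S) (k : ℕ) (r : ℝ)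
    (h : ∃ T' : SimpleGraph ↥P, T'.IsTree ∧
      (∀ e ∈ T'.edgeSet, ewgt P S r (e.map Subtype.val) ≠ ⊤) ∧
      ∑ e ∈ T'.edgeSet.toFinite.toFinset,
        (ewgt P S r (e.map Subtype.val)).toNat / 2 ≤ k) :
    ∃ S' : Finset Pt, S' ⊆ S ∧ S'.card ≤ k ∧
      ∃ T : SimpleGraph ↥(P ∪ S'), T.IsTree ∧
        ∀ x y : ↥(P ∪ S'), T.Adj x y → dist (x : Pt) (y : Pt) ≤ 2 * r := by
  obtain ⟨T', hT', hfin, hsum⟩ := h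
  choose! K hKPS hKe hKcard hK using
    fun e he => exists_connected_finset_of_ewgt_ne_top hPS (hfin e he)
  set E := T'.edgeSet.toFinite.toFinset
  set S' := E.biUnion fun e => (K e).filter (· ∈ S)
  have hKS' : ∀ e ∈ T'.edgeSet, K e ⊆ P ∪ S' := fun e he x hx => by
    rcases Finset.mem_union.mp (hKPS e he hx) with hxP | hxS
    · exact Finset.mem_union_left _ hxP
    · exact Finset.mem_union_right _ (Finset.mem_biUnion.mpr
        ⟨e, (Set.Finite.mem_toFinset _).mpr he, Finset.mem_filter.mpr ⟨hx, hxS⟩⟩)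
  have hconn : ((distGraph Pt (2 * r)).induce (P ∪ S' : Finset Pt)).Connected := by
    refine hT'.connected.induce_connected_of_edge_patches Subtype.val (fun e => K e)
      (fun p => Finset.mem_union_left _ p.2) (fun e he => Finset.coe_subset.mpr (hKS' e he))
      hKe (fun e he => (hK e he).preconnected) fun v hv => ?_
    rcases Finset.mem_union.mp hv with hvP | hvS'
    · exact Or.inl ⟨⟨v, hvP⟩, rfl⟩
    · obtain ⟨e, he, hve⟩ := Finset.mem_biUnion.mp hvS'
      exact Or.inr ⟨e, (Set.Finite.mem_toFinset _).mp he, (Finset.mem_filter.mp hve).1⟩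
  obtain ⟨T, hTle, hT⟩ := hconn.exists_isTree_le
  refine ⟨S', Finset.biUnion_subset.mpr fun e _ x hx => (Finset.mem_filter.mp hx).2, ?_,
    T, hT, fun x y hxy => (hTle hxy).2⟩
  calc S'.card ≤ ∑ e ∈ E, ((K e).filter (· ∈ S)).card := Finset.card_biUnion_le
    _ ≤ ∑ e ∈ E, (ewgt P S r (e.map Subtype.val)).toNat / 2 :=
      Finset.sum_le_sum fun e he => hKcard e ((Set.Finite.mem_toFinset _).mp he)
    _ ≤ k := hsum

theorem stmt4 (P S : Finset Pt) (hPS : Disjoint P S) (k : ℕ) (r : ℝ) (hr : 0 < r)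
    (h : ∃ T' : SimpleGraph ↥P, T'.IsTree ∧
      (∀ e ∈ T'.edgeSet, ewgt P S r (e.map Subtype.val) ≠ ⊤) ∧
      ∑ e ∈ T'.edgeSet.toFinite.toFinset,
        (ewgt P S r (e.map Subtype.val)).toNat / 2 ≤ k) :
    ∃ S' : Finset Pt, S' ⊆ S ∧ S'.card ≤ k ∧
      ∃ T : SimpleGraph ↥(P ∪ S'), T.IsTree ∧
        ∀ x y : ↥(P ∪ S'), T.Adj x y → dist (x : Pt) (y : Pt) ≤ 2 * r :=
  stmt4_general P S hPS k r h
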